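/- Let p > 1, N ≥ 1, and let η, η′, ξ ∈ ℝ^N satisfy |η−ξ| + |η′−ξ| > 0. Then (Φ_p(η,ξ) − Φ_p(η′,ξ))·(η−η′) ≥ min{p−1, 2^{2−p}} (|η−ξ| + |η′−ξ|)^{p−2} |η−η′|². -/

import Mathlib

/-!
Put `a = η - ξ`, `b = η' - ξ`, `s = ‖a‖`, `t = ‖b‖`. Then `Φ_p(η,ξ) - Φ_p(η',ξ)` is
`s^{p-2} a - t^{p-2} b`, and both sides of the inequality are affine functions of `x = ⟪a, b⟫`,
which ranges over `[-st, st]` by Cauchy–Schwarz. It therefore suffices to check the two collinear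
endpoints, which are one-variable inequalities for `r ↦ r^{p-1}`: at `x = st` a lower bound for
`(s^{p-1} - t^{p-1}) / (s - t)`, at `x = -st` a lower bound for `s^{p-1} + t^{p-1}`. Both follow from
concavity of `r^{p-1}` when `p ≤ 2` and from convexity (or monotonicity of `r^{p-2}`) when `p ≥ 2`.
-/

/-- The translated p-Laplacian nonlinearity
`Φ_p(η,ξ) = |η−ξ|^{p−2}(η−ξ) + |ξ|^{p−2}ξ`
(with the convention `|x|^{p−2}x = 0` when `x = 0`). -/
noncomputable def Phi (p : ℝ) {N : ℕ} (η ξ : EuclideanSpace ℝ (Fin N)) :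
    EuclideanSpace ℝ (Fin N) :=
  (‖η - ξ‖ ^ (p - 2)) • (η - ξ) + (‖ξ‖ ^ (p - 2)) • ξ

open Real RealInnerProductSpace

lemma Real.rpow_add_le_mul_rpow_add_rpow {a b q : ℝ} (ha : 0 ≤ a) (hb : 0 ≤ b) (hq : 1 ≤ q) :
    (a + b) ^ q ≤ 2 ^ (q - 1) * (a ^ q + b ^ q) := by
  lift a to NNReal using ha
  lift b to NNReal using hb
  exact_mod_cast NNReal.rpow_add_le_mul_rpow_add_rpow a b hq

lemma Real.mul_rpow_sub_one_mul_sub_le_rpow_sub_rpow {q s t : ℝ} (hq₀ : 0 ≤ q) (hq₁ : q ≤ 1)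
    (hs : 0 < s) (ht : 0 ≤ t) : q * s ^ (q - 1) * (s - t) ≤ s ^ q - t ^ q := by
  have bernoulli := rpow_one_add_le_one_add_mul_self (s := t / s - 1)
    (by linarith [div_nonneg ht hs.le]) hq₀ hq₁
  rw [add_sub_cancel, div_rpow ht hs.le, div_le_iff₀ (rpow_pos_of_pos hs q)] at bernoulli
  calc q * s ^ (q - 1) * (s - t) = s ^ q - (1 + q * (t / s - 1)) * s ^ q := by
        rw [rpow_sub_one hs.ne']; field_simp; ring
    _ ≤ s ^ q - t ^ q := by linarith

lemma Real.rpow_sub_two_mul_self {p s : ℝ} (hp : p ≠ 1) (hs : 0 ≤ s) :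
    s ^ (p - 2) * s = s ^ (p - 1) := by
  rw [← rpow_add_one' hs (by contrapose! hp; linarith)]
  ring_nf

section Endpoints

variable {p s t : ℝ}

lemma min_mul_rpow_mul_sub_le_rpow_sub_rpow (hp : 1 < p) (ht : 0 ≤ t) (hts : t ≤ s) :
    min (p - 1) (2 ^ (2 - p)) * (s + t) ^ (p - 2) * (s - t) ≤ s ^ (p - 1) - t ^ (p - 1) := by
  have hs : 0 ≤ s := ht.trans hts
  have hst : 0 ≤ s - t := sub_nonneg.mpr hts
  rcases le_total p 2 with hp2 | hp2
  · rcases hs.eq_or_lt with rfl | hs'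
    · obtain rfl : t = 0 := le_antisymm hts ht
      simp
    have tangent := mul_rpow_sub_one_mul_sub_le_rpow_sub_rpow (q := p - 1) (by linarith)
      (by linarith) hs' ht
    rw [show p - 1 - 1 = p - 2 by ring] at tangent
    calc min (p - 1) (2 ^ (2 - p)) * (s + t) ^ (p - 2) * (s - t)
        ≤ (p - 1) * s ^ (p - 2) * (s - t) := by
          gcongr ?_ * ?_ * _
          · exact min_le_left _ _
          · exact rpow_le_rpow_of_nonpos hs' (by linarith) (by linarith)
      _ ≤ _ := tangent
  · have hmid : 2 ^ (2 - p) * (s + t) ^ (p - 2) = ((s + t) / 2) ^ (p - 2) := by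
      rw [div_rpow (by linarith) zero_le_two, div_eq_mul_inv, ← rpow_neg zero_le_two]
      ring_nf
    have hs_mid : ((s + t) / 2) ^ (p - 2) ≤ s ^ (p - 2) :=
      rpow_le_rpow (by positivity) (by linarith) (by linarith)
    have ht_mid : t ^ (p - 2) ≤ ((s + t) / 2) ^ (p - 2) :=
      rpow_le_rpow ht (by linarith) (by linarith)
    rw [← rpow_sub_two_mul_self hp.ne' hs, ← rpow_sub_two_mul_self hp.ne' ht]
    calc min (p - 1) (2 ^ (2 - p)) * (s + t) ^ (p - 2) * (s - t)
        ≤ 2 ^ (2 - p) * (s + t) ^ (p - 2) * (s - t) := by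
          gcongr
          exact min_le_right _ _
      _ = ((s + t) / 2) ^ (p - 2) * (s - t) := by rw [hmid]
      _ ≤ _ := by
          linear_combination mul_le_mul_of_nonneg_right hs_mid hs +
            mul_le_mul_of_nonneg_right ht_mid ht

lemma min_mul_rpow_add_le_rpow_add_rpow (hp : 1 < p) (hs : 0 ≤ s) (ht : 0 ≤ t) :
    min (p - 1) (2 ^ (2 - p)) * (s + t) ^ (p - 1) ≤ s ^ (p - 1) + t ^ (p - 1) := by
  rcases le_total p 2 with hp2 | hp2
  · calc min (p - 1) (2 ^ (2 - p)) * (s + t) ^ (p - 1) ≤ 1 * (s + t) ^ (p - 1) := by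
          gcongr
          exact (min_le_left _ _).trans (by linarith)
      _ ≤ _ := by
          rw [one_mul]
          exact rpow_add_le_add_rpow hs ht (by linarith) (by linarith)
  · calc min (p - 1) (2 ^ (2 - p)) * (s + t) ^ (p - 1)
        ≤ 2 ^ (2 - p) * (2 ^ (p - 2) * (s ^ (p - 1) + t ^ (p - 1))) := by
          gcongr
          · exact min_le_right _ _
          · have convex := rpow_add_le_mul_rpow_add_rpow hs ht (q := p - 1) (by linarith)
            rwa [show p - 1 - 1 = p - 2 by ring] at convex
      _ = _ := by
          rw [← mul_assoc, ← rpow_add two_pos]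
          simp

end Endpoints

lemma sub_mul_nonneg_of_abs_le {a b x u : ℝ} (hx : |x| ≤ u) (hu : 0 ≤ a - b * u)
    (hu' : 0 ≤ a + b * u) : 0 ≤ a - b * x := by
  obtain ⟨hxl, hxu⟩ := abs_le.mp hx
  rcases le_total 0 b with hb | hb <;> nlinarith

lemma min_mul_rpow_mul_le_of_abs_le {p s t x : ℝ} (hp : 1 < p) (hs : 0 ≤ s) (ht : 0 ≤ t)
    (hx : |x| ≤ s * t) :
    min (p - 1) (2 ^ (2 - p)) * (s + t) ^ (p - 2) * (s ^ 2 - 2 * x + t ^ 2)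
      ≤ s ^ (p - 2) * s ^ 2 + t ^ (p - 2) * t ^ 2 - (s ^ (p - 2) + t ^ (p - 2)) * x := by
  set c := min (p - 1) (2 ^ (2 - p))
  have hs_pow := rpow_sub_two_mul_self hp.ne' hs
  have ht_pow := rpow_sub_two_mul_self hp.ne' ht
  have hst_pow := rpow_sub_two_mul_self hp.ne' (add_nonneg hs ht)
  rw [← sub_nonneg]
  convert sub_mul_nonneg_of_abs_le hx
    (a := s ^ (p - 2) * s ^ 2 + t ^ (p - 2) * t ^ 2 - c * (s + t) ^ (p - 2) * (s ^ 2 + t ^ 2))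
    (b := s ^ (p - 2) + t ^ (p - 2) - 2 * c * (s + t) ^ (p - 2)) ?_ ?_ using 1
  · ring
  · have hdiff : c * (s + t) ^ (p - 2) * (s - t) ^ 2 ≤ (s ^ (p - 1) - t ^ (p - 1)) * (s - t) := by
      rcases le_total t s with hts | hst
      · linear_combination (s - t) * min_mul_rpow_mul_sub_le_rpow_sub_rpow hp ht hts
      · have hdiff' := min_mul_rpow_mul_sub_le_rpow_sub_rpow hp hs hst
        rw [add_comm t s] at hdiff'
        linear_combination (t - s) * hdiff'
    rw [← hs_pow, ← ht_pow] at hdiff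
    linear_combination hdiff
  · have hsum := min_mul_rpow_add_le_rpow_add_rpow hp hs ht
    rw [← hs_pow, ← ht_pow, ← hst_pow] at hsum
    linear_combination (s + t) * hsum

section InnerProductSpace

variable {E : Type*} [NormedAddCommGroup E] [InnerProductSpace ℝ E]

lemma inner_rpow_smul_sub_rpow_smul (r : ℝ) (a b : E) :
    ⟪‖a‖ ^ r • a - ‖b‖ ^ r • b, a - b⟫
      = ‖a‖ ^ r * ‖a‖ ^ 2 + ‖b‖ ^ r * ‖b‖ ^ 2 - (‖a‖ ^ r + ‖b‖ ^ r) * ⟪a, b⟫ := by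
  simp only [inner_sub_left, inner_sub_right, real_inner_smul_left, real_inner_self_eq_norm_sq,
    real_inner_comm b a]
  ring

theorem min_mul_rpow_mul_norm_sub_sq_le_inner {p : ℝ} (hp : 1 < p) (a b : E) :
    min (p - 1) (2 ^ (2 - p)) * (‖a‖ + ‖b‖) ^ (p - 2) * ‖a - b‖ ^ 2
      ≤ ⟪‖a‖ ^ (p - 2) • a - ‖b‖ ^ (p - 2) • b, a - b⟫ := by
  rw [inner_rpow_smul_sub_rpow_smul, norm_sub_sq_real]
  exact min_mul_rpow_mul_le_of_abs_le hp (norm_nonneg a) (norm_nonneg b)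
    (abs_real_inner_le_norm a b)

end InnerProductSpace

lemma Phi_sub_Phi (p : ℝ) {N : ℕ} (η η' ξ : EuclideanSpace ℝ (Fin N)) :
    Phi p η ξ - Phi p η' ξ = ‖η - ξ‖ ^ (p - 2) • (η - ξ) - ‖η' - ξ‖ ^ (p - 2) • (η' - ξ) := by
  simp only [Phi]
  abel

theorem phi_difference_inner_lower_bound_general (p : ℝ) (hp : 1 < p) (N : ℕ)
    (η η' ξ : EuclideanSpace ℝ (Fin N)) :
    min (p - 1) (2 ^ (2 - p)) * (‖η - ξ‖ + ‖η' - ξ‖) ^ (p - 2) * ‖η - η'‖ ^ 2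
      ≤ (inner ℝ (Phi p η ξ - Phi p η' ξ) (η - η') : ℝ) := by
  rw [Phi_sub_Phi, show η - η' = (η - ξ) - (η' - ξ) by abel]
  exact min_mul_rpow_mul_norm_sub_sq_le_inner hp _ _

/-- Lemma 3.1, inequality (3.3): for `p > 1` and `|η−ξ| + |η′−ξ| > 0`,
`(Φ_p(η,ξ) − Φ_p(η′,ξ))·(η−η′) ≥ min{p−1, 2^{2−p}} (|η−ξ| + |η′−ξ|)^{p−2} |η−η′|²`. -/
theorem phi_difference_inner_lower_bound (p : ℝ) (hp : 1 < p) (N : ℕ) (hN : 1 ≤ N)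
    (η η' ξ : EuclideanSpace ℝ (Fin N)) (h : 0 < ‖η - ξ‖ + ‖η' - ξ‖) :
    min (p - 1) (2 ^ (2 - p)) * (‖η - ξ‖ + ‖η' - ξ‖) ^ (p - 2) * ‖η - η'‖ ^ 2
      ≤ (inner ℝ (Phi p η ξ - Phi p η' ξ) (η - η') : ℝ) :=
  phi_difference_inner_lower_bound_general p hp N η η' ξ
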